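/- Let G be an abelian lattice-ordered group with weak order unit and let e, f be complemented elements of G not in a maximal proper c-subgroup M. Then e ∧ f ∉ M. Consequently, with U_c(e) = {N ∈ Max_c(G) : e ∉ N}, we have U_c(e) ∩ U_c(f) = U_c(e ∧ f) for complemented e, f. -/

import Mathlib

variable {G : Type*} [Lattice G] [AddCommGroup G]
  [CovariantClass G G (· + ·) (· ≤ ·)]

/-- The polar of a subset `S` of a lattice-ordered group. -/
def polar (S : Set G) : Set G := {h : G | ∀ g ∈ S, |h| ⊓ |g| = 0}

/-- A convex ℓ-subgroup: a subgroup closed under the lattice operations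
which is convex. -/
def IsConvexLSubgroup (H : Set G) : Prop :=
  (0 : G) ∈ H ∧ (∀ a ∈ H, ∀ b ∈ H, a + b ∈ H) ∧ (∀ a ∈ H, -a ∈ H) ∧
  (∀ a ∈ H, ∀ b ∈ H, a ⊔ b ∈ H) ∧ (∀ a ∈ H, ∀ b ∈ H, a ⊓ b ∈ H) ∧
  (∀ a b : G, 0 ≤ a → a ≤ b → b ∈ H → a ∈ H)

/-- A weak order unit: a positive element with trivial polar. -/
def IsWeakUnit (w : G) : Prop := 0 ≤ w ∧ ∀ x : G, |x| ⊓ w = 0 → x = 0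

/-- A d-subgroup: a convex ℓ-subgroup closed under double polars. -/
def IsDSubgroup (H : Set G) : Prop :=
  IsConvexLSubgroup H ∧ ∀ h ∈ H, polar (polar {h}) ⊆ H

/-- A maximal d-subgroup: a convex ℓ-subgroup maximal with respect to
not containing any weak order unit. -/
def IsMaxD (M : Set G) : Prop :=
  IsConvexLSubgroup M ∧ (∀ w ∈ M, ¬ IsWeakUnit w) ∧
  ∀ H : Set G, IsConvexLSubgroup H → (∀ w ∈ H, ¬ IsWeakUnit w) → M ⊆ H → H = M

/-- A complemented element. -/
def IsComplementedElt (g : G) : Prop :=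
  0 ≤ g ∧ ∃ f : G, 0 ≤ f ∧ g ⊓ f = 0 ∧ IsWeakUnit (g ⊔ f)

/-- A c-subgroup: a convex ℓ-subgroup generated by its complemented elements,
equivalently every element is dominated in absolute value by a complemented
element of the subgroup. -/
def IsCSubgroup (H : Set G) : Prop :=
  IsConvexLSubgroup H ∧ ∀ h ∈ H, ∃ e ∈ H, IsComplementedElt e ∧ |h| ≤ e

/-- A maximal proper c-subgroup: a c-subgroup maximal with respect to
not containing any weak order unit. -/
def IsMaxC (N : Set G) : Prop :=
  IsCSubgroup N ∧ (∀ w ∈ N, ¬ IsWeakUnit w) ∧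
  ∀ H : Set G, IsCSubgroup H → (∀ w ∈ H, ¬ IsWeakUnit w) → N ⊆ H → H = N

/-- `Mc M`: the convex ℓ-subgroup generated by the complemented elements of `M`. -/
def Mc (M : Set G) : Set G :=
  ⋂₀ {H : Set G | IsConvexLSubgroup H ∧ {e ∈ M | IsComplementedElt e} ⊆ H}

/-- The basic set `U_c(e)` of maximal proper c-subgroups omitting `e`. -/
def Uc (e : G) : Set (Set G) := {N : Set G | IsMaxC N ∧ e ∉ N}

/-!
Let `M` be a maximal proper c-subgroup and `e ∉ M` complemented. The elements dominated in
absolute value by some `m + n • e` with `m ∈ M` form a c-subgroup (the join `G(e) + M`) strictly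
larger than `M`, so by maximality it contains a weak unit `w ≤ m + n • e`. Doing the same for `f`
and enlarging `m` and `n` to common values, the weak unit `w ⊓ w'` lies below
`(m + n • e) ⊓ (m + n • f) = m + (n • e ⊓ n • f) ≤ m + (n * n) • (e ⊓ f)`,
which would lie in `M` if `e ⊓ f` did.
-/

lemma sup_le_add_of_nonneg {a b : G} (ha : 0 ≤ a) (hb : 0 ≤ b) : a ⊔ b ≤ a + b :=
  sup_le (le_add_of_nonneg_right hb) (le_add_of_nonneg_left ha)

lemma abs_sup_le_add_abs (a b : G) : |a ⊔ b| ≤ |a| + |b| := by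
  refine le_trans ?_ (sup_le_add_of_nonneg (abs_nonneg a) (abs_nonneg b))
  refine abs_le'.2 ⟨sup_le_sup (le_abs_self a) (le_abs_self b), ?_⟩
  rw [neg_sup]
  exact inf_le_left.trans ((neg_le_abs a).trans le_sup_left)

lemma abs_inf_le_add_abs (a b : G) : |a ⊓ b| ≤ |a| + |b| := by
  refine le_trans ?_ (sup_le_add_of_nonneg (abs_nonneg a) (abs_nonneg b))
  refine abs_le'.2 ⟨inf_le_left.trans ((le_abs_self a).trans le_sup_left), ?_⟩
  rw [neg_inf]
  exact sup_le_sup (neg_le_abs a) (neg_le_abs b)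

/-- Riesz decomposition. -/
lemma inf_add_le_add_inf {a b c : G} (ha : 0 ≤ a) (hb : 0 ≤ b) (hc : 0 ≤ c) :
    a ⊓ (b + c) ≤ a ⊓ b + a ⊓ c := by
  rw [inf_add, add_inf, add_inf]
  refine le_inf (le_inf ?_ ?_) (le_inf ?_ inf_le_right)
  · exact inf_le_left.trans (le_add_of_nonneg_right ha)
  · exact inf_le_left.trans (le_add_of_nonneg_right hc)
  · exact inf_le_left.trans (le_add_of_nonneg_left hb)

lemma inf_nsmul_le_nsmul_inf {a b : G} (ha : 0 ≤ a) (hb : 0 ≤ b) :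
    ∀ n : ℕ, a ⊓ n • b ≤ n • (a ⊓ b)
  | 0 => by simp
  | n + 1 =>
    calc a ⊓ (n + 1) • b = a ⊓ (n • b + b) := by rw [succ_nsmul]
      _ ≤ a ⊓ n • b + a ⊓ b := inf_add_le_add_inf ha (nsmul_nonneg hb n) hb
      _ ≤ n • (a ⊓ b) + a ⊓ b := add_le_add_left (inf_nsmul_le_nsmul_inf ha hb n) _
      _ = (n + 1) • (a ⊓ b) := (succ_nsmul _ n).symm

lemma nsmul_inf_nsmul_le {a b : G} (ha : 0 ≤ a) (hb : 0 ≤ b) (m n : ℕ) :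
    m • a ⊓ n • b ≤ (n * m) • (a ⊓ b) :=
  calc m • a ⊓ n • b ≤ n • (m • a ⊓ b) := inf_nsmul_le_nsmul_inf (nsmul_nonneg ha m) hb n
    _ = n • (b ⊓ m • a) := by rw [inf_comm]
    _ ≤ n • (m • (b ⊓ a)) := nsmul_le_nsmul_right (inf_nsmul_le_nsmul_inf hb ha m) n
    _ = (n * m) • (a ⊓ b) := by rw [mul_nsmul', inf_comm]

lemma IsWeakUnit.mono {w w' : G} (hw : IsWeakUnit w) (hle : w ≤ w') : IsWeakUnit w' :=
  ⟨hw.1.trans hle, fun x hx => hw.2 x <| le_antisymm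
    ((inf_le_inf_left _ hle).trans hx.le) (le_inf (abs_nonneg x) hw.1)⟩

lemma IsWeakUnit.inf {w₁ w₂ : G} (h₁ : IsWeakUnit w₁) (h₂ : IsWeakUnit w₂) :
    IsWeakUnit (w₁ ⊓ w₂) := by
  refine ⟨le_inf h₁.1 h₂.1, fun x hx => h₁.2 x (h₂.2 _ ?_)⟩
  rwa [abs_of_nonneg (le_inf (abs_nonneg x) h₁.1), inf_assoc]

lemma IsComplementedElt.add {a b : G} (ha : IsComplementedElt a) (hb : IsComplementedElt b) :
    IsComplementedElt (a + b) := by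
  let : DistribLattice G := AddCommGroup.toDistribLattice G
  obtain ⟨ha₀, a', ha'₀, haa', hwa⟩ := ha
  obtain ⟨hb₀, b', hb'₀, hbb', hwb⟩ := hb
  refine ⟨add_nonneg ha₀ hb₀, a' ⊓ b', le_inf ha'₀ hb'₀, ?_, (hwa.inf hwb).mono ?_⟩
  · refine le_antisymm ?_ (le_inf (add_nonneg ha₀ hb₀) (le_inf ha'₀ hb'₀))
    calc (a + b) ⊓ (a' ⊓ b') = (a' ⊓ b') ⊓ (a + b) := inf_comm _ _
      _ ≤ (a' ⊓ b') ⊓ a + (a' ⊓ b') ⊓ b :=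
          inf_add_le_add_inf (le_inf ha'₀ hb'₀) ha₀ hb₀
      _ ≤ a' ⊓ a + b' ⊓ b := add_le_add (inf_le_inf_right _ inf_le_left)
          (inf_le_inf_right _ inf_le_right)
      _ = 0 := by rw [inf_comm a', haa', inf_comm b', hbb', add_zero]
  · calc (a ⊔ a') ⊓ (b ⊔ b') ≤ (a ⊔ b ⊔ a') ⊓ (a ⊔ b ⊔ b') :=
          inf_le_inf (sup_le_sup_right le_sup_left _) (sup_le_sup_right le_sup_right _)
      _ = a ⊔ b ⊔ a' ⊓ b' := (sup_inf_left _ _ _).symm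
      _ ≤ (a + b) ⊔ a' ⊓ b' := sup_le_sup_right (sup_le_add_of_nonneg ha₀ hb₀) _

lemma IsComplementedElt.add_nsmul {a b : G} (ha : IsComplementedElt a)
    (hb : IsComplementedElt b) : ∀ n : ℕ, IsComplementedElt (a + n • b)
  | 0 => by rwa [zero_nsmul, add_zero]
  | n + 1 => by rw [succ_nsmul, ← add_assoc]; exact (ha.add_nsmul hb n).add hb

namespace IsConvexLSubgroup

omit [CovariantClass G G (· + ·) (· ≤ ·)]

variable {H : Set G}

lemma add_mem (hH : IsConvexLSubgroup H) {a b : G} (ha : a ∈ H) (hb : b ∈ H) : a + b ∈ H :=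
  hH.2.1 a ha b hb

lemma mem_of_nonneg_of_le (hH : IsConvexLSubgroup H) {a b : G} (ha : 0 ≤ a) (hab : a ≤ b)
    (hb : b ∈ H) : a ∈ H :=
  hH.2.2.2.2.2 a b ha hab hb

lemma abs_mem (hH : IsConvexLSubgroup H) {a : G} (ha : a ∈ H) : |a| ∈ H :=
  hH.2.2.2.1 a ha (-a) (hH.2.2.1 a ha)

lemma nsmul_mem (hH : IsConvexLSubgroup H) {a : G} (ha : a ∈ H) : ∀ n : ℕ, n • a ∈ H
  | 0 => by rw [zero_nsmul]; exact hH.1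
  | n + 1 => by rw [succ_nsmul]; exact hH.add_mem (hH.nsmul_mem ha n) ha

end IsConvexLSubgroup

lemma isConvexLSubgroup_setOf_abs_le {S : Set G} (hS₀ : (0 : G) ∈ S)
    (hS : ∀ s ∈ S, ∀ t ∈ S, s + t ∈ S) : IsConvexLSubgroup {x | ∃ s ∈ S, |x| ≤ s} := by
  have dominated : ∀ {a b c : G}, |c| ≤ |a| + |b| →
      (∃ s ∈ S, |a| ≤ s) → (∃ s ∈ S, |b| ≤ s) → ∃ s ∈ S, |c| ≤ s := by
    rintro a b c hc ⟨s, hs, has⟩ ⟨t, ht, hbt⟩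
    exact ⟨s + t, hS s hs t ht, hc.trans (add_le_add has hbt)⟩
  refine ⟨⟨0, hS₀, abs_zero.le⟩, fun a ha b hb => dominated (abs_add_le a b) ha hb,
    fun a ha => by simpa only [Set.mem_ofPred_eq, abs_neg] using ha,
    fun a ha b hb => dominated (abs_sup_le_add_abs a b) ha hb,
    fun a ha b hb => dominated (abs_inf_le_add_abs a b) ha hb, ?_⟩
  rintro a b ha hab ⟨s, hs, hbs⟩
  exact ⟨s, hs, (abs_of_nonneg ha).trans_le (hab.trans ((le_abs_self b).trans hbs))⟩

lemma IsMaxC.exists_isWeakUnit_le_add_nsmul {M : Set G} (hM : IsMaxC M) {e : G}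
    (he : IsComplementedElt e) (heM : e ∉ M) :
    ∃ m ∈ M, ∃ n : ℕ, ∃ w, IsWeakUnit w ∧ w ≤ m + n • e := by
  obtain ⟨⟨hMconv, hMgen⟩, -, hMmax⟩ := hM
  set S : Set G := {s | ∃ m ∈ M, ∃ n : ℕ, m + n • e = s}
  set H : Set G := {x | ∃ s ∈ S, |x| ≤ s}
  have hHconv : IsConvexLSubgroup H := by
    refine isConvexLSubgroup_setOf_abs_le ⟨0, hMconv.1, 0, by simp⟩ ?_
    rintro _ ⟨m₁, hm₁, n₁, rfl⟩ _ ⟨m₂, hm₂, n₂, rfl⟩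
    exact ⟨m₁ + m₂, hMconv.add_mem hm₁ hm₂, n₁ + n₂, by rw [add_nsmul]; abel⟩
  have hH : IsCSubgroup H := by
    refine ⟨hHconv, ?_⟩
    rintro x ⟨_, ⟨m, hm, n, rfl⟩, hx⟩
    obtain ⟨c, hcM, hc, hmc⟩ := hMgen m hm
    have hcn : IsComplementedElt (c + n • e) := hc.add_nsmul he n
    refine ⟨c + n • e, ⟨_, ⟨c, hcM, n, rfl⟩, (abs_of_nonneg hcn.1).le⟩, hcn, ?_⟩
    exact hx.trans (add_le_add_left ((le_abs_self m).trans hmc) _)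
  have hMH : M ⊆ H := fun x hx =>
    let ⟨c, hcM, _, hxc⟩ := hMgen x hx
    ⟨c + 0 • e, ⟨c, hcM, 0, rfl⟩, by simpa using hxc⟩
  have heH : e ∈ H := ⟨0 + 1 • e, ⟨0, hMconv.1, 1, rfl⟩, by simp [abs_of_nonneg he.1]⟩
  by_contra! hno
  refine heM (hMmax H hH ?_ hMH ▸ heH)
  rintro w ⟨_, ⟨m, hm, n, rfl⟩, hw⟩ hwu
  exact hno m hm n w hwu ((le_abs_self w).trans hw)

lemma IsMaxC.inf_notMem {M : Set G} (hM : IsMaxC M) {e f : G} (he : IsComplementedElt e)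
    (hf : IsComplementedElt f) (heM : e ∉ M) (hfM : f ∉ M) : e ⊓ f ∉ M := by
  intro hefM
  have hMconv : IsConvexLSubgroup M := hM.1.1
  obtain ⟨m₁, hm₁, n₁, w₁, hw₁, hw₁le⟩ := hM.exists_isWeakUnit_le_add_nsmul he heM
  obtain ⟨m₂, hm₂, n₂, w₂, hw₂, hw₂le⟩ := hM.exists_isWeakUnit_le_add_nsmul hf hfM
  set m := |m₁| + |m₂|
  set n := n₁ + n₂
  have hm : m ∈ M := hMconv.add_mem (hMconv.abs_mem hm₁) (hMconv.abs_mem hm₂)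
  have hw₁le' : w₁ ≤ m + n • e := hw₁le.trans <| add_le_add
    ((le_abs_self m₁).trans (le_add_of_nonneg_right (abs_nonneg m₂)))
    (nsmul_le_nsmul_left he.1 (Nat.le_add_right n₁ n₂))
  have hw₂le' : w₂ ≤ m + n • f := hw₂le.trans <| add_le_add
    ((le_abs_self m₂).trans (le_add_of_nonneg_left (abs_nonneg m₁)))
    (nsmul_le_nsmul_left hf.1 (Nat.le_add_left n₂ n₁))
  have hwle : w₁ ⊓ w₂ ≤ m + (n * n) • (e ⊓ f) :=
    calc w₁ ⊓ w₂ ≤ (m + n • e) ⊓ (m + n • f) := inf_le_inf hw₁le' hw₂le'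
      _ = m + n • e ⊓ n • f := (add_inf _ _ _).symm
      _ ≤ m + (n * n) • (e ⊓ f) := add_le_add_right (nsmul_inf_nsmul_le he.1 hf.1 n n) m
  have hwM : w₁ ⊓ w₂ ∈ M := hMconv.mem_of_nonneg_of_le (hw₁.inf hw₂).1 hwle
    (hMconv.add_mem hm (hMconv.nsmul_mem hefM _))
  exact hM.2.1 _ hwM (hw₁.inf hw₂)

theorem Uc_inter_general (e f : G) (he : IsComplementedElt e) (hf : IsComplementedElt f) :
    (∀ M : Set G, IsMaxC M → e ∉ M → f ∉ M → e ⊓ f ∉ M) ∧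
    Uc e ∩ Uc f = Uc (e ⊓ f) := by
  refine ⟨fun M hM => hM.inf_notMem he hf, ?_⟩
  ext N
  simp only [Uc, Set.mem_inter_iff, Set.mem_ofPred_eq]
  constructor
  · rintro ⟨⟨hN, heN⟩, -, hfN⟩
    exact ⟨hN, hN.inf_notMem he hf heN hfN⟩
  · rintro ⟨hN, hefN⟩
    have of_le : ∀ {g}, e ⊓ f ≤ g → g ∈ N → e ⊓ f ∈ N :=
      hN.1.1.mem_of_nonneg_of_le (le_inf he.1 hf.1)
    exact ⟨⟨hN, fun heN => hefN (of_le inf_le_left heN)⟩,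
      hN, fun hfN => hefN (of_le inf_le_right hfN)⟩

/-- if complemented `e, f` both lie outside a maximal proper
c-subgroup `M`, then so does `e ∧ f`; consequently
`U_c(e) ∩ U_c(f) = U_c(e ∧ f)` for complemented `e, f`. -/
theorem Uc_inter (u : G) (hu : IsWeakUnit u)
    (e f : G) (he : IsComplementedElt e) (hf : IsComplementedElt f) :
    (∀ M : Set G, IsMaxC M → e ∉ M → f ∉ M → e ⊓ f ∉ M) ∧
    Uc e ∩ Uc f = Uc (e ⊓ f) :=
  Uc_inter_general e f he hf
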